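/- arXiv:2605.26041 — 6 statements merged into one kernel-verified Lean document; each statement's English description precedes it below -/
import Mathlib

section
/- The prefix-sum decomposition of the diagonal triangular form: for a binary vector x of length L and prefix sums x̂_c = ⊕_{p ≤ c} x_p, the sum of consecutive prefix products ⊕_{c=1}^{L-1} x̂_{c-1}·x̂_c equals T(x,x) plus the linear residual ⊕_{p : L-1-p odd} x_p over GF(2). -/
/-- Triangular form over GF(2), on `ℕ`-indexed vectors restricted to `[0,L)`. -/
def triT (L : ℕ) (x y : ℕ → ZMod 2) : ZMod 2 :=
  ∑ p ∈ Finset.range L, ∑ c' ∈ Finset.range L, if p < c' then x p * y c' else 0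

/-- Prefix sums `x̂_c = ⊕_{p ≤ c} x_p`. -/
def prefixSum (x : ℕ → ZMod 2) (c : ℕ) : ZMod 2 :=
  ∑ p ∈ Finset.range (c + 1), x p

lemma triT_succ (L : ℕ) (x : ℕ → ZMod 2) :
    triT (L + 1) x x = triT L x x + (∑ p ∈ Finset.range L, x p) * x L := by
  unfold triT
  rw [Finset.sum_range_succ, Finset.sum_mul]
  have h1 : ∀ p, ∑ c' ∈ Finset.range (L+1), (if p < c' then x p * x c' else 0)
      = (∑ c' ∈ Finset.range L, if p < c' then x p * x c' else 0)
        + (if p < L then x p * x L else 0) := fun p => Finset.sum_range_succ _ L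
  simp only [h1]
  rw [Finset.sum_add_distrib]
  have h2 : ∑ c' ∈ Finset.range L, (if L < c' then x L * x c' else 0) = 0 := by
    apply Finset.sum_eq_zero; intro c' hc'
    simp only [Finset.mem_range] at hc'
    rw [if_neg (by omega)]
  rw [h2, if_neg (lt_irrefl L)]
  have h3 : ∀ p ∈ Finset.range L, (if p < L then x p * x L else 0) = x p * x L := by
    intro p hp; rw [if_pos (Finset.mem_range.mp hp)]
  rw [Finset.sum_congr rfl h3]
  ring

lemma res_succ (L : ℕ) (x : ℕ → ZMod 2) :
    ∑ p ∈ (Finset.range (L+1)).filter (fun p => Odd (L + 1 - 1 - p)), x p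
      = (∑ p ∈ (Finset.range L).filter (fun p => Odd (L - 1 - p)), x p)
        + ∑ p ∈ Finset.range L, x p := by
  have hset : (Finset.range (L+1)).filter (fun p => Odd (L + 1 - 1 - p))
      = (Finset.range L).filter (fun p => ¬ Odd (L - 1 - p)) := by
    ext p
    simp only [Finset.mem_filter, Finset.mem_range, Nat.odd_iff]
    omega
  have hsplit : Finset.range L = (Finset.range L).filter (fun p => Odd (L - 1 - p))
      ∪ (Finset.range L).filter (fun p => ¬ Odd (L - 1 - p)) :=
    (Finset.filter_union_filter_not_eq _ _).symm
  have hdisj : Disjoint ((Finset.range L).filter (fun p => Odd (L - 1 - p)))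
      ((Finset.range L).filter (fun p => ¬ Odd (L - 1 - p))) :=
    Finset.disjoint_filter_filter_not _ _ _
  rw [hset]
  nth_rewrite 3 [hsplit]
  rw [Finset.sum_union hdisj]
  have hchar : ∀ a b : ZMod 2, b = a + (a + b) := by decide
  exact hchar _ _

/-- Prefix-sum decomposition of the diagonal triangular form:
`⊕_{c=1}^{L-1} x̂_{c-1}·x̂_c = T(x,x) ⊕ ⊕_{p : L-1-p odd} x_p`. -/
theorem prefix_decomp_diag (L : ℕ) (hL : 1 ≤ L) (x : ℕ → ZMod 2) :
    ∑ c ∈ Finset.Ico 1 L, prefixSum x (c - 1) * prefixSum x c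
      = triT L x x + ∑ p ∈ (Finset.range L).filter (fun p => Odd (L - 1 - p)), x p := by
  induction L, hL using Nat.le_induction with
  | base => simp [triT, prefixSum]
  | succ L hL ih =>
    rw [Finset.sum_Ico_succ_top hL, ih, triT_succ, res_succ L]
    have hpreL : prefixSum x (L - 1) = ∑ p ∈ Finset.range L, x p := by
      unfold prefixSum
      rw [show L - 1 + 1 = L from by omega]
    have hpre : prefixSum x L = (∑ p ∈ Finset.range L, x p) + x L :=
      Finset.sum_range_succ _ _
    rw [hpre, hpreL]
    have hsq : ∀ a : ZMod 2, a ^ 2 = a := by decide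
    ring_nf
    rw [hsq]
    ring
end

section
/- Hall's three-stage decomposition: every permutation of the L×L grid (viewed as a permutation of Fin L × Fin L) can be written as π = ρB ∘ κ ∘ ρA where ρA and ρB preserve the row coordinate (permute within rows) and κ preserves the column coordinate (permutes within columns). -/
/-- A permutation of the grid is a row permutation if it preserves the row coordinate. -/
def IsRowPerm {L : ℕ} (ρ : Equiv.Perm (Fin L × Fin L)) : Prop :=
  ∀ p : Fin L × Fin L, (ρ p).1 = p.1

/-- A permutation of the grid is a column permutation if it preserves the column coordinate. -/
def IsColPerm {L : ℕ} (κ : Equiv.Perm (Fin L × Fin L)) : Prop :=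
  ∀ p : Fin L × Fin L, (κ p).2 = p.2

open Finset

/-- singleton filter gives an existence-unique statement -/
lemma filter_card_one_exists_unique {E : Type*} {s : Finset E} {p : E → Prop} [DecidablePred p]
    (h : (s.filter p).card = 1) : ∃! x, x ∈ s ∧ p x := by
  obtain ⟨x, hx⟩ := Finset.card_eq_one.mp h
  have hxmem : x ∈ s.filter p := hx ▸ Finset.mem_singleton_self x
  refine ⟨x, Finset.mem_filter.mp hxmem, ?_⟩
  intro y hy
  have : y ∈ s.filter p := Finset.mem_filter.mpr hy
  rw [hx] at this
  exact Finset.mem_singleton.mp this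

/-- counting edges with endpoint in a set, for a `k`-regular side -/
lemma card_filter_mem {L : ℕ} {E : Type*} [DecidableEq E] (a : E → Fin L) (s : Finset E) (k : ℕ)
    (ha : ∀ r, (s.filter fun e => a e = r).card = k) (A : Finset (Fin L)) :
    (s.filter fun e => a e ∈ A).card = A.card * k := by
  rw [Finset.card_eq_sum_card_fiberwise (f := a) (s := s.filter fun e => a e ∈ A) (t := A)
    (fun x hx => (Finset.mem_filter.mp hx).2)]
  rw [Finset.sum_congr rfl (fun r hr => ?_), Finset.sum_const, smul_eq_mul]
  rw [Finset.filter_filter]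
  rw [← ha r]
  congr 1
  ext e
  simp only [Finset.mem_filter]
  constructor
  · rintro ⟨hs, _, h2⟩; exact ⟨hs, h2⟩
  · rintro ⟨hs, h2⟩; exact ⟨hs, h2 ▸ hr, h2⟩

/-- Extract one perfect matching from a `k`-regular bipartite multigraph (Hall). -/
lemma exists_matching {L k : ℕ} {E : Type*} [DecidableEq E] (a b : E → Fin L) (s : Finset E)
    (hk : 0 < k)
    (ha : ∀ r, (s.filter fun e => a e = r).card = k)
    (hb : ∀ r, (s.filter fun e => b e = r).card = k) :
    ∃ M : Finset E, M ⊆ s ∧ (∀ r, (M.filter fun e => a e = r).card = 1) ∧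
      (∀ r, (M.filter fun e => b e = r).card = 1) := by
  classical
  set t : Fin L → Finset (Fin L) := fun r => (s.filter fun e => a e = r).image b with ht
  have hall : ∀ A : Finset (Fin L), A.card ≤ (A.biUnion t).card := by
    intro A
    have hsub : (s.filter fun e => a e ∈ A) ⊆ (s.filter fun e => b e ∈ A.biUnion t) := by
      intro e he
      rw [Finset.mem_filter] at he ⊢
      refine ⟨he.1, Finset.mem_biUnion.mpr ⟨a e, he.2, ?_⟩⟩
      exact Finset.mem_image.mpr ⟨e, Finset.mem_filter.mpr ⟨he.1, rfl⟩, rfl⟩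
    have h1 := card_filter_mem a s k ha A
    have h2 := card_filter_mem b s k hb (A.biUnion t)
    have := Finset.card_le_card hsub
    rw [h1, h2] at this
    exact Nat.le_of_mul_le_mul_right this hk
  obtain ⟨f, hfinj, hf⟩ := (Finset.all_card_le_biUnion_card_iff_exists_injective t).mp hall
  have hfbij : Function.Bijective f := Finite.injective_iff_bijective.mp hfinj
  -- choose an edge realizing each (r, f r)
  have hedge : ∀ r, ∃ e, e ∈ s ∧ a e = r ∧ b e = f r := by
    intro r
    obtain ⟨e, he, hbe⟩ := Finset.mem_image.mp (hf r)
    rw [Finset.mem_filter] at he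
    exact ⟨e, he.1, he.2, hbe⟩
  choose eSel heS heA heB using hedge
  have heInj : Function.Injective eSel := by
    intro r r' h
    rw [← heA r, ← heA r', h]
  refine ⟨Finset.image eSel Finset.univ, ?_, ?_, ?_⟩
  · intro e he
    obtain ⟨r, _, rfl⟩ := Finset.mem_image.mp he
    exact heS r
  · intro r
    rw [Finset.card_eq_one]
    refine ⟨eSel r, ?_⟩
    ext e
    simp only [Finset.mem_filter, Finset.mem_image, Finset.mem_singleton, Finset.mem_univ,
      true_and]
    constructor
    · rintro ⟨⟨r', rfl⟩, h2⟩
      rw [heA r'] at h2; rw [h2]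
    · rintro rfl; exact ⟨⟨r, rfl⟩, heA r⟩
  · intro r'
    rw [Finset.card_eq_one]
    obtain ⟨r, hr⟩ := hfbij.2 r'
    refine ⟨eSel r, ?_⟩
    ext e
    simp only [Finset.mem_filter, Finset.mem_image, Finset.mem_singleton, Finset.mem_univ,
      true_and]
    constructor
    · rintro ⟨⟨r'', rfl⟩, h2⟩
      rw [heB r''] at h2
      rw [hfinj (h2.trans hr.symm)]
    · rintro rfl; exact ⟨⟨r, rfl⟩, (heB r).trans hr⟩

/-- Partition a `k`-regular bipartite multigraph into `k` perfect matchings. -/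
lemma exists_partition {L : ℕ} {E : Type*} [DecidableEq E] (a b : E → Fin L) :
    ∀ (k : ℕ) (s : Finset E),
      (∀ r, (s.filter fun e => a e = r).card = k) →
      (∀ r, (s.filter fun e => b e = r).card = k) →
      ∃ M : Fin k → Finset E,
        (∀ j, M j ⊆ s) ∧
        (∀ e ∈ s, ∃! j, e ∈ M j) ∧
        (∀ j r, ((M j).filter fun e => a e = r).card = 1) ∧
        (∀ j r, ((M j).filter fun e => b e = r).card = 1) := by
  intro k
  induction k with
  | zero =>
    intro s ha _
    refine ⟨Fin.elim0, fun j => j.elim0, ?_, fun j => j.elim0, fun j => j.elim0⟩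
    intro e he
    have h0 : (s.filter fun x => a x = a e) = ∅ := Finset.card_eq_zero.mp (ha (a e))
    have hm : e ∈ s.filter fun x => a x = a e := Finset.mem_filter.mpr ⟨he, rfl⟩
    rw [h0] at hm
    exact absurd hm (Finset.notMem_empty e)
  | succ k ih =>
    intro s ha hb
    obtain ⟨M₀, hM₀s, hM₀a, hM₀b⟩ := exists_matching a b s (Nat.succ_pos k) ha hb
    have hfilt : ∀ (c : E → Fin L), (∀ r, (s.filter fun e => c e = r).card = k + 1) →
        (∀ r, (M₀.filter fun e => c e = r).card = 1) →
        ∀ r, ((s \ M₀).filter fun e => c e = r).card = k := by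
      intro c hc hMc r
      have heq : ((s \ M₀).filter fun e => c e = r)
          = (s.filter fun e => c e = r) \ (M₀.filter fun e => c e = r) := by
        ext e
        simp only [Finset.mem_filter, Finset.mem_sdiff]
        tauto
      rw [heq, Finset.card_sdiff_of_subset
        (Finset.filter_subset_filter _ hM₀s), hc r, hMc r]
      omega
    have ha' := hfilt a ha hM₀a
    have hb' := hfilt b hb hM₀b
    obtain ⟨M', hM's, hM'u, hM'a, hM'b⟩ := ih (s \ M₀) ha' hb'
    refine ⟨Fin.cases M₀ M', ?_, ?_, ?_, ?_⟩
    · intro j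
      induction j using Fin.cases with
      | zero => exact hM₀s
      | succ i => exact (hM's i).trans (Finset.sdiff_subset)
    · intro e he
      by_cases h0 : e ∈ M₀
      · refine ⟨0, h0, ?_⟩
        intro j hj
        induction j using Fin.cases with
        | zero => rfl
        | succ i => exact absurd h0 (Finset.mem_sdiff.mp (hM's i hj)).2
      · obtain ⟨i, hi, hiu⟩ := hM'u e (Finset.mem_sdiff.mpr ⟨he, h0⟩)
        refine ⟨i.succ, hi, ?_⟩
        intro j hj
        induction j using Fin.cases with
        | zero => exact absurd hj h0
        | succ i' => rw [hiu i' hj]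
    · intro j r
      induction j using Fin.cases with
      | zero => exact hM₀a r
      | succ i => exact hM'a i r
    · intro j r
      induction j using Fin.cases with
      | zero => exact hM₀b r
      | succ i => exact hM'b i r

lemma card_fiber_fst {L : ℕ} (r : Fin L) :
    ((Finset.univ : Finset (Fin L × Fin L)).filter fun p => p.1 = r).card = L := by
  have : ((Finset.univ : Finset (Fin L × Fin L)).filter fun p => p.1 = r)
      = {r} ×ˢ Finset.univ := by
    ext p
    simp only [Finset.mem_filter, Finset.mem_univ, true_and, Finset.mem_product,
      Finset.mem_singleton, and_true]
  rw [this, Finset.card_product]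
  simp

/-- Hall's three-stage Row-Column-Row decomposition: every permutation of the `L×L` grid
factors as `π = ρB ∘ κ ∘ ρA` with `ρA, ρB` row permutations and `κ` a column permutation. -/
theorem hall_row_col_row {L : ℕ} (π : Equiv.Perm (Fin L × Fin L)) :
    ∃ ρA ρB κ : Equiv.Perm (Fin L × Fin L),
      IsRowPerm ρA ∧ IsRowPerm ρB ∧ IsColPerm κ ∧ π = ρB * κ * ρA := by
  classical
  have ha : ∀ r, ((Finset.univ : Finset (Fin L × Fin L)).filter fun p => p.1 = r).card = L :=
    card_fiber_fst
  have hb : ∀ r, ((Finset.univ : Finset (Fin L × Fin L)).filter fun p => (π p).1 = r).card = L := by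
    intro r
    have : ((Finset.univ : Finset (Fin L × Fin L)).filter fun p => (π p).1 = r)
        = (Finset.univ.filter fun q : Fin L × Fin L => q.1 = r).map π.symm.toEmbedding := by
      ext p
      simp only [Finset.mem_filter, Finset.mem_map, Finset.mem_univ, true_and,
        Equiv.coe_toEmbedding]
      constructor
      · intro h; exact ⟨π p, h, π.symm_apply_apply p⟩
      · rintro ⟨q, hq, rfl⟩; rwa [π.apply_symm_apply]
    rw [this, Finset.card_map, card_fiber_fst]
  obtain ⟨M, _, hcov, hMa, hMb⟩ :=
    exists_partition (fun p : Fin L × Fin L => p.1) (fun p => (π p).1) L Finset.univ ha hb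
  -- unique color of each cell
  have hcol : ∀ p : Fin L × Fin L, ∃! j, p ∈ M j := fun p => hcov p (Finset.mem_univ p)
  set col : Fin L × Fin L → Fin L := fun p => (hcol p).choose with hcoldef
  have hcolmem : ∀ p, p ∈ M (col p) := fun p => (hcol p).choose_spec.1
  have hcoluniq : ∀ p j, p ∈ M j → j = col p := fun p j h => (hcol p).choose_spec.2 j h
  -- unique cell of color j in row r
  have hea : ∀ j r, ∃! p, p ∈ M j ∧ p.1 = r := fun j r =>
    filter_card_one_exists_unique (hMa j r)
  set e : Fin L → Fin L → Fin L × Fin L := fun j r => (hea j r).choose with hedef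
  have he1 : ∀ j r, e j r ∈ M j := fun j r => (hea j r).choose_spec.1.1
  have he2 : ∀ j r, (e j r).1 = r := fun j r => (hea j r).choose_spec.1.2
  have heuniq : ∀ j r p, p ∈ M j → p.1 = r → p = e j r := fun j r p h1 h2 =>
    (hea j r).choose_spec.2 p ⟨h1, h2⟩
  have hep : ∀ p : Fin L × Fin L, e (col p) p.1 = p :=
    fun p => (heuniq (col p) p.1 p (hcolmem p) rfl).symm
  -- unique cell of color j with image row r'
  have heb : ∀ j r', ∃! p, p ∈ M j ∧ (π p).1 = r' := fun j r' =>
    filter_card_one_exists_unique (hMb j r')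
  -- row-wise column permutations
  have hginj : ∀ r : Fin L, Function.Injective (fun c => col (r, c)) := by
    intro r c c' hcc
    have h' : col (r, c) = col (r, c') := hcc
    have h1 : ((r, c) : Fin L × Fin L) = e (col (r, c)) r :=
      heuniq _ r (r, c) (hcolmem _) rfl
    have h2 : ((r, c') : Fin L × Fin L) = e (col (r, c)) r := by
      rw [h']; exact heuniq _ r (r, c') (hcolmem _) rfl
    exact (Prod.ext_iff.mp (h1.trans h2.symm)).2
  set g : Fin L → Equiv.Perm (Fin L) := fun r =>
    Equiv.ofBijective _ (Finite.injective_iff_bijective.mp (hginj r)) with hgdef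
  -- column-wise row permutations
  have hhinj : ∀ j : Fin L, Function.Injective (fun r => (π (e j r)).1) := by
    intro j r r' hrr
    have h : (π (e j r)).1 = (π (e j r')).1 := hrr
    have := (heb j (π (e j r')).1).choose_spec
    have h1 : e j r = (heb j (π (e j r')).1).choose := this.2 _ ⟨he1 j r, h⟩
    have h2 : e j r' = (heb j (π (e j r')).1).choose := this.2 _ ⟨he1 j r', rfl⟩
    rw [← he2 j r, ← he2 j r', h1.trans h2.symm]
  set h : Fin L → Equiv.Perm (Fin L) := fun j =>
    Equiv.ofBijective _ (Finite.injective_iff_bijective.mp (hhinj j)) with hhdef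
  set ρA : Equiv.Perm (Fin L × Fin L) := Equiv.prodShear (Equiv.refl (Fin L)) g with hρA
  set κ : Equiv.Perm (Fin L × Fin L) :=
    (Equiv.prodComm (Fin L) (Fin L)).trans
      ((Equiv.prodShear (Equiv.refl (Fin L)) h).trans (Equiv.prodComm (Fin L) (Fin L))) with hκ
  have hρAapp : ∀ p : Fin L × Fin L, ρA p = (p.1, col p) := by
    rintro ⟨r, c⟩; rfl
  have hκapp : ∀ q : Fin L × Fin L, κ q = ((π (e q.2 q.1)).1, q.2) := by
    rintro ⟨r, j⟩; rfl
  have key : ∀ p : Fin L × Fin L, (κ (ρA p)) = ((π p).1, col p) := by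
    intro p
    rw [hρAapp, hκapp]
    simp only
    rw [hep p]
  refine ⟨ρA, π * (κ * ρA)⁻¹, κ, ?_, ?_, ?_, ?_⟩
  · intro p; rw [hρAapp]
  · intro q
    have : (κ * ρA) ((κ * ρA)⁻¹ q) = q := Equiv.apply_symm_apply _ q
    have hk := key ((κ * ρA)⁻¹ q)
    rw [Equiv.Perm.mul_apply] at this
    rw [this] at hk
    simp only [Equiv.Perm.mul_apply]
    rw [show (π ((κ * ρA)⁻¹ q)).1 = (((π ((κ * ρA)⁻¹ q)).1, col ((κ * ρA)⁻¹ q)) : Fin L × Fin L).1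
      from rfl, ← hk]
  · intro p; rw [hκapp]
  · group
end

section
/- Odd–even transposition sort correctness: for any permutation of L elements on a line, L rounds of alternating odd/even adjacent compare-and-swap layers suffice to sort, i.e., any permutation of Fin L is a product of at most L layers, where each layer is a product of disjoint adjacent transpositions (i, i+1) with all layer-t transpositions having i ≡ t (mod 2). -/
/-- A layer of parity `t`: a product of disjoint adjacent transpositions `(i, i+1)` with
`i ≡ t (mod 2)`, characterized as an involution moving every non-fixed point to an
adjacent position whose smaller endpoint has parity `t`. -/
def IsLayer {L : ℕ} (t : ℕ) (τ : Equiv.Perm (Fin L)) : Prop :=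
  τ * τ = 1 ∧
  ∀ i : Fin L, τ i = i ∨
    (((τ i : ℕ) = (i : ℕ) + 1 ∨ (i : ℕ) = (τ i : ℕ) + 1) ∧
      min (i : ℕ) ((τ i : ℕ)) % 2 = t % 2)

namespace OddEvenSort

variable {L : ℕ}

/-- The compare-exchange function for round `t` applied to state `π` (position ↦ value). -/
def swapFun (t : ℕ) (π : Equiv.Perm (Fin L)) (i : Fin L) : Fin L :=
  if _hpar : (i : ℕ) % 2 = t % 2 then
    if h1 : (i : ℕ) + 1 < L then
      if π ⟨(i : ℕ) + 1, h1⟩ < π i then ⟨(i : ℕ) + 1, h1⟩ else i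
    else i
  else
    if _h0 : 0 < (i : ℕ) then
      if π i < π ⟨(i : ℕ) - 1, Nat.lt_of_le_of_lt (Nat.sub_le _ _) i.isLt⟩ then
        ⟨(i : ℕ) - 1, Nat.lt_of_le_of_lt (Nat.sub_le _ _) i.isLt⟩
      else i
    else i

lemma swapFun_move {t : ℕ} {π : Equiv.Perm (Fin L)} {i : Fin L}
    (h1 : (i : ℕ) + 1 < L) (hpar : (i : ℕ) % 2 = t % 2)
    (hv : π ⟨(i : ℕ) + 1, h1⟩ < π i) :
    swapFun t π i = ⟨(i : ℕ) + 1, h1⟩ ∧ swapFun t π ⟨(i : ℕ) + 1, h1⟩ = i := by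
  constructor
  · simp [swapFun, hpar, h1, hv]
  · have hpar' : ¬ (((⟨(i : ℕ) + 1, h1⟩ : Fin L) : ℕ) % 2 = t % 2) := by simp; omega
    have h0 : 0 < ((⟨(i : ℕ) + 1, h1⟩ : Fin L) : ℕ) := by simp
    have heq : (⟨((⟨(i : ℕ) + 1, h1⟩ : Fin L) : ℕ) - 1,
        Nat.lt_of_le_of_lt (Nat.sub_le _ _) (Fin.isLt _)⟩ : Fin L) = i := by
      apply Fin.ext; simp
    rw [swapFun, dif_neg hpar', dif_pos h0, heq, if_pos hv]

lemma swapFun_cases (t : ℕ) (π : Equiv.Perm (Fin L)) (i : Fin L) :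
    swapFun t π i = i ∨
    (∃ h1 : (i : ℕ) + 1 < L, (i : ℕ) % 2 = t % 2 ∧ π ⟨(i : ℕ) + 1, h1⟩ < π i ∧
      swapFun t π i = ⟨(i : ℕ) + 1, h1⟩) ∨
    (∃ h0 : 0 < (i : ℕ), ((i : ℕ) - 1) % 2 = t % 2 ∧
      π i < π ⟨(i : ℕ) - 1, Nat.lt_of_le_of_lt (Nat.sub_le _ _) i.isLt⟩ ∧
      swapFun t π i = ⟨(i : ℕ) - 1, Nat.lt_of_le_of_lt (Nat.sub_le _ _) i.isLt⟩) := by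
  unfold swapFun
  split_ifs with hpar h1 hv h0 hv'
  · exact Or.inr (Or.inl ⟨h1, hpar, hv, rfl⟩)
  · exact Or.inl rfl
  · exact Or.inl rfl
  · exact Or.inr (Or.inr ⟨h0, by omega, hv', rfl⟩)
  all_goals exact Or.inl rfl

lemma swapFun_involutive (t : ℕ) (π : Equiv.Perm (Fin L)) :
    Function.Involutive (swapFun t π) := by
  intro i
  rcases swapFun_cases t π i with h | ⟨h1, hpar, hv, h⟩ | ⟨h0, hpar, hv, h⟩
  · rw [h, h]
  · rw [h]; exact (swapFun_move h1 hpar hv).2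
  · rw [h]
    have h1' : ((⟨(i : ℕ) - 1, Nat.lt_of_le_of_lt (Nat.sub_le _ _) i.isLt⟩ : Fin L) : ℕ) + 1 < L := by
      simp; omega
    have hpar' : ((⟨(i : ℕ) - 1, Nat.lt_of_le_of_lt (Nat.sub_le _ _) i.isLt⟩ : Fin L) : ℕ) % 2 = t % 2 := hpar
    have heq : (⟨((⟨(i : ℕ) - 1, Nat.lt_of_le_of_lt (Nat.sub_le _ _) i.isLt⟩ : Fin L) : ℕ) + 1, h1'⟩ : Fin L) = i := by
      apply Fin.ext; simp; omega
    have hv' : π (⟨((⟨(i : ℕ) - 1, Nat.lt_of_le_of_lt (Nat.sub_le _ _) i.isLt⟩ : Fin L) : ℕ) + 1, h1'⟩ : Fin L)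
        < π ⟨(i : ℕ) - 1, Nat.lt_of_le_of_lt (Nat.sub_le _ _) i.isLt⟩ := by rw [heq]; exact hv
    have := (swapFun_move h1' hpar' hv').1
    rw [this, heq]

/-- The layer permutation for round `t` on state `π`. -/
def layer (t : ℕ) (π : Equiv.Perm (Fin L)) : Equiv.Perm (Fin L) :=
  (swapFun_involutive t π).toPerm _

@[simp] lemma layer_apply (t : ℕ) (π : Equiv.Perm (Fin L)) (i : Fin L) :
    layer t π i = swapFun t π i := rfl

/-- The trajectory of states: `traj σ 0 = σ⁻¹`, and each round multiplies by its layer. -/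
def traj (σ : Equiv.Perm (Fin L)) : ℕ → Equiv.Perm (Fin L)
  | 0 => σ⁻¹
  | t + 1 => traj σ t * layer t (traj σ t)

lemma traj_succ_apply (σ : Equiv.Perm (Fin L)) (t : ℕ) (i : Fin L) :
    traj σ (t + 1) i = traj σ t (swapFun t (traj σ t) i) := rfl

section Threshold

variable (σ : Equiv.Perm (Fin L)) (v : Fin L)

/-- Positions holding values `≥ v` at time `t`. -/
def thrS (t : ℕ) : Finset (Fin L) := Finset.univ.filter fun i => v ≤ traj σ t i

lemma mem_thrS {t : ℕ} {i : Fin L} : i ∈ thrS σ v t ↔ v ≤ traj σ t i := by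
  simp [thrS]

lemma thrS_succ (t : ℕ) :
    thrS σ v (t + 1) = (thrS σ v t).image (layer t (traj σ t)) := by
  ext i
  simp only [Finset.mem_image]
  constructor
  · intro hi
    refine ⟨layer t (traj σ t) i, ?_, ?_⟩
    · rw [mem_thrS] at hi ⊢
      rw [traj_succ_apply] at hi
      exact hi
    · exact swapFun_involutive t (traj σ t) i
  · rintro ⟨a, ha, rfl⟩
    rw [mem_thrS] at ha ⊢
    rw [traj_succ_apply]
    rw [layer_apply, swapFun_involutive t (traj σ t) a]
    exact ha

lemma card_thrS (t : ℕ) : (thrS σ v t).card = (thrS σ v 0).card := by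
  induction t with
  | zero => rfl
  | succ t ih =>
    rw [thrS_succ, Finset.card_image_of_injective _ (layer t (traj σ t)).injective, ih]

/-- Number of positions holding values `≥ v`. -/
def mcard : ℕ := (thrS σ v 0).card

lemma mcard_le : mcard σ v ≤ L := by
  have := Finset.card_le_univ (thrS σ v 0)
  simpa [mcard] using this

/-- The increasing enumeration of `thrS` at time `t`. -/
def qEmb (t : ℕ) : Fin (mcard σ v) ↪o Fin L :=
  (thrS σ v t).orderEmbOfFin (card_thrS σ v t)

/-- Position (as a natural number) of the `k`-th (from the left) value `≥ v` at time `t`. -/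
def Q (t : ℕ) (k : Fin (mcard σ v)) : ℕ := (qEmb σ v t k : ℕ)

lemma Q_strictMono (t : ℕ) : StrictMono (Q σ v t) := by
  intro a b hab
  exact (qEmb σ v t).strictMono hab

lemma Q_mem (t : ℕ) (k : Fin (mcard σ v)) : qEmb σ v t k ∈ thrS σ v t :=
  Finset.orderEmbOfFin_mem _ _ _

lemma Q_lt_L (t : ℕ) (k : Fin (mcard σ v)) : Q σ v t k < L := (qEmb σ v t k).isLt

end Threshold

/-- gap lemma for strictly monotone `Fin m → ℕ`. -/
lemma strictMono_gap {m : ℕ} {f : Fin m → ℕ} (hf : StrictMono f) :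
    ∀ (d : ℕ) (a b : Fin m), (b : ℕ) = (a : ℕ) + d → f a + d ≤ f b := by
  intro d
  induction d with
  | zero => intro a b h; have hab : a = b := Fin.ext (by omega); rw [hab]; omega
  | succ d ih =>
    intro a b h
    have hb' : (a : ℕ) + d < m := by have := b.isLt; omega
    have h1 := ih a ⟨(a : ℕ) + d, hb'⟩ rfl
    have h2 : f ⟨(a : ℕ) + d, hb'⟩ < f b := hf (by simp [Fin.lt_def]; omega)
    omega

lemma strictMono_le {m : ℕ} {f : Fin m → ℕ} (hf : StrictMono f) (k : Fin m) :
    (k : ℕ) ≤ f k := by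
  have h0 : (0 : ℕ) < m := k.pos
  have := strictMono_gap hf (k : ℕ) ⟨0, h0⟩ k (by simp)
  omega

section Threshold2

variable (σ : Equiv.Perm (Fin L)) (v : Fin L)

lemma le_Q (t : ℕ) (k : Fin (mcard σ v)) : (k : ℕ) ≤ Q σ v t k :=
  strictMono_le (Q_strictMono σ v t) k

lemma Q_le (t : ℕ) (k : Fin (mcard σ v)) : Q σ v t k ≤ L - mcard σ v + k := by
  have hm : mcard σ v ≤ L := mcard_le σ v
  have hk : (k : ℕ) < mcard σ v := k.isLt
  have hlast : (mcard σ v - 1) < mcard σ v := by omega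
  have h1 := strictMono_gap (Q_strictMono σ v t) (mcard σ v - 1 - k) k ⟨mcard σ v - 1, hlast⟩
    (by simp; omega)
  have h2 := Q_lt_L σ v t ⟨mcard σ v - 1, hlast⟩
  omega

lemma Q_pos_mcard (t : ℕ) (k : Fin (mcard σ v)) : (k:ℕ) < mcard σ v := k.isLt

/-- Where the `k`-th tracked position goes in one round: it moves right iff it is active
(parity matches), in range, and the value to its right is `< v`. -/
def gApply (t : ℕ) (j : Fin L) : Fin L :=
  if h : (j : ℕ) % 2 = t % 2 ∧ (j : ℕ) + 1 < L then
    if traj σ t ⟨(j : ℕ) + 1, h.2⟩ < v then ⟨(j : ℕ) + 1, h.2⟩ else j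
  else j

lemma gApply_val_cases (t : ℕ) (j : Fin L) :
    gApply σ v t j = j ∨
    (∃ h1 : (j : ℕ) + 1 < L, (j : ℕ) % 2 = t % 2 ∧ traj σ t ⟨(j : ℕ) + 1, h1⟩ < v ∧
      gApply σ v t j = ⟨(j : ℕ) + 1, h1⟩) := by
  unfold gApply
  split_ifs with h hv
  · exact Or.inr ⟨h.2, h.1, hv, rfl⟩
  all_goals exact Or.inl rfl

lemma gApply_mem {t : ℕ} {j : Fin L} (hj : j ∈ thrS σ v t) :
    gApply σ v t j ∈ thrS σ v (t + 1) := by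
  rw [mem_thrS] at hj
  rcases gApply_val_cases σ v t j with h | ⟨h1, hpar, hv, h⟩
  · -- the tracked position stays; check the value there is still ≥ v
    rw [h, mem_thrS, traj_succ_apply]
    rcases swapFun_cases t (traj σ t) j with hs | ⟨h1, hpar, hvv, hs⟩ | ⟨h0, hpar, hvv, hs⟩
    · rw [hs]; exact hj
    · -- swap with right neighbour: both values are ≥ v (else gApply would have moved)
      rw [hs]
      by_contra hlt
      push_neg at hlt
      have : gApply σ v t j = ⟨(j : ℕ) + 1, h1⟩ := by
        unfold gApply
        rw [dif_pos ⟨hpar, h1⟩, if_pos hlt]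
      rw [h] at this
      have := congrArg (fun x : Fin L => (x : ℕ)) this
      simp at this
    · -- swap with left neighbour: that value is even bigger
      rw [hs]
      exact le_of_lt (lt_of_le_of_lt hj hvv)
  · -- the tracked position moves right: the swap indeed happens
    rw [h, mem_thrS, traj_succ_apply]
    have hv' : traj σ t ⟨(j : ℕ) + 1, h1⟩ < traj σ t j := lt_of_lt_of_le hv hj
    rw [(swapFun_move h1 hpar hv').2]
    exact hj

lemma gApply_strictMonoOn {t : ℕ} {a b : Fin L} (ha : a ∈ thrS σ v t) (hb : b ∈ thrS σ v t)
    (hab : a < b) : gApply σ v t a < gApply σ v t b := by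
  have hbb : (b : ℕ) ≤ (gApply σ v t b : ℕ) := by
    rcases gApply_val_cases σ v t b with h | ⟨h1, _, _, h⟩ <;> rw [h] <;> simp
  rcases gApply_val_cases σ v t a with h | ⟨h1, hpar, hv, h⟩
  · rw [h, Fin.lt_def]
    rw [Fin.lt_def] at hab
    omega
  · -- a moves to a+1; b cannot be at a+1 since the value at a+1 is < v
    have hne : (b : ℕ) ≠ (a : ℕ) + 1 := by
      intro hcontra
      have : b = ⟨(a : ℕ) + 1, h1⟩ := Fin.ext hcontra
      rw [mem_thrS, this] at hb
      exact absurd hv (not_lt.mpr hb)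
    rw [h, Fin.lt_def]
    rw [Fin.lt_def] at hab
    simp only []
    omega

lemma qEmb_succ (t : ℕ) (k : Fin (mcard σ v)) :
    qEmb σ v (t + 1) k = gApply σ v t (qEmb σ v t k) := by
  have hmono : StrictMono fun k : Fin (mcard σ v) => gApply σ v t (qEmb σ v t k) := by
    intro a b hab
    exact gApply_strictMonoOn σ v (Q_mem σ v t a) (Q_mem σ v t b) ((qEmb σ v t).strictMono hab)
  have hfs : ∀ k : Fin (mcard σ v), gApply σ v t (qEmb σ v t k) ∈ thrS σ v (t + 1) :=
    fun k => gApply_mem σ v (Q_mem σ v t k)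
  have := Finset.orderEmbOfFin_unique (card_thrS σ v (t + 1)) hfs hmono
  exact (congrFun this k).symm

lemma Q_succ_cases (t : ℕ) (k : Fin (mcard σ v)) :
    Q σ v (t + 1) k = Q σ v t k ∨
    (Q σ v (t + 1) k = Q σ v t k + 1 ∧ Q σ v t k % 2 = t % 2 ∧ Q σ v t k + 1 < L) := by
  unfold Q
  rw [qEmb_succ]
  rcases gApply_val_cases σ v t (qEmb σ v t k) with h | ⟨h1, hpar, _, h⟩
  · rw [h]; exact Or.inl rfl
  · rw [h]; exact Or.inr ⟨rfl, hpar, h1⟩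

lemma Q_succ_move {t : ℕ} {k : Fin (mcard σ v)} (hpar : Q σ v t k % 2 = t % 2)
    (h1 : Q σ v t k + 1 < L) (hv : traj σ t ⟨Q σ v t k + 1, h1⟩ < v) :
    Q σ v (t + 1) k = Q σ v t k + 1 := by
  unfold Q
  rw [qEmb_succ]
  unfold gApply
  rw [dif_pos ⟨hpar, h1⟩]
  split_ifs with h
  · rfl
  · exact absurd hv h

/-- If the position just to the right of the `k`-th tracked position is also tracked,
it is the `(k+1)`-st. -/
lemma next_mem {t : ℕ} {k : Fin (mcard σ v)} (h1 : Q σ v t k + 1 < L)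
    (hmem : (⟨Q σ v t k + 1, h1⟩ : Fin L) ∈ thrS σ v t) :
    ∃ hk : (k : ℕ) + 1 < mcard σ v, Q σ v t ⟨(k : ℕ) + 1, hk⟩ = Q σ v t k + 1 := by
  have hrange : ((⟨Q σ v t k + 1, h1⟩ : Fin L) : Fin L) ∈ Set.range (qEmb σ v t) := by
    unfold qEmb
    erw [Finset.range_orderEmbOfFin]
    simpa using hmem
  obtain ⟨k2, hk2⟩ := hrange
  have hval : Q σ v t k2 = Q σ v t k + 1 := by unfold Q; rw [hk2]; rfl
  have hgt : k < k2 := by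
    have hQ : Q σ v t k < Q σ v t k2 := by omega
    exact (Q_strictMono σ v t).lt_iff_lt.mp hQ
  have hk : (k : ℕ) + 1 < mcard σ v := by
    have := k2.isLt
    rw [Fin.lt_def] at hgt
    omega
  refine ⟨hk, ?_⟩
  have hle : Q σ v t ⟨(k : ℕ) + 1, hk⟩ ≤ Q σ v t k + 1 := by
    rcases eq_or_lt_of_le (show ((⟨(k : ℕ) + 1, hk⟩ : Fin (mcard σ v))) ≤ k2 by
      rw [Fin.le_def]; rw [Fin.lt_def] at hgt; simpa using hgt) with he | hlt
    · rw [he]; omega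
    · have := Q_strictMono σ v t hlt; omega
  have hgtQ : Q σ v t k < Q σ v t ⟨(k : ℕ) + 1, hk⟩ :=
    Q_strictMono σ v t (by rw [Fin.lt_def]; simp)
  omega

lemma Q_mono_succ (t : ℕ) (k : Fin (mcard σ v)) : Q σ v t k ≤ Q σ v (t + 1) k := by
  rcases Q_succ_cases σ v t k with h | ⟨h, _, _⟩ <;> omega

/-- Parity lemma: a tracked position that "should have been moving" (i.e. `t ≥ mcard - k`)
and is not yet at its final place has the parity of the current round. -/
lemma par_lemma : ∀ t : ℕ, ∀ k : Fin (mcard σ v), mcard σ v - (k : ℕ) ≤ t →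
    Q σ v t k < L - mcard σ v + k → Q σ v t k % 2 = t % 2 := by
  intro t
  induction t with
  | zero =>
    intro k hk _
    have := k.isLt
    omega
  | succ t ih =>
    intro k hk hlt
    have hm : mcard σ v ≤ L := mcard_le σ v
    have hkm := k.isLt
    rcases Q_succ_cases σ v t k with hstay | ⟨hmove, hpar, _⟩
    · -- no move this round
      rw [hstay] at hlt ⊢
      by_contra hbad
      have hxpar : Q σ v t k % 2 = t % 2 := by omega
      have h1 : Q σ v t k + 1 < L := by omega
      -- it was active, in range, so it must have been blocked
      have hmem : (⟨Q σ v t k + 1, h1⟩ : Fin L) ∈ thrS σ v t := by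
        by_contra hno
        have hv : traj σ t ⟨Q σ v t k + 1, h1⟩ < v := by
          rw [mem_thrS] at hno
          exact lt_of_not_ge hno
        have := Q_succ_move σ v hxpar h1 hv
        omega
      obtain ⟨hk1, hQ1⟩ := next_mem σ v h1 hmem
      have hpar1 := ih ⟨(k : ℕ) + 1, hk1⟩ (by simp; omega) (by rw [hQ1]; simp; omega)
      rw [hQ1] at hpar1
      omega
    · rw [hmove]
      omega

/-- Movement lemma: from round `mcard - k` on, the `k`-th tracked position moves right
every round until it reaches its final position. -/
lemma move_lemma (t : ℕ) (k : Fin (mcard σ v)) (hk : mcard σ v - (k : ℕ) ≤ t)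
    (hlt : Q σ v t k < L - mcard σ v + k) : Q σ v (t + 1) k = Q σ v t k + 1 := by
  have hm : mcard σ v ≤ L := mcard_le σ v
  have hkm := k.isLt
  have hpar := par_lemma σ v t k hk hlt
  have h1 : Q σ v t k + 1 < L := by omega
  have hno : (⟨Q σ v t k + 1, h1⟩ : Fin L) ∉ thrS σ v t := by
    intro hmem
    obtain ⟨hk1, hQ1⟩ := next_mem σ v h1 hmem
    have hpar1 := par_lemma σ v t ⟨(k : ℕ) + 1, hk1⟩ (by simp; omega) (by rw [hQ1]; simp; omega)
    rw [hQ1] at hpar1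
    omega
  have hv : traj σ t ⟨Q σ v t k + 1, h1⟩ < v := by
    rw [mem_thrS] at hno
    exact lt_of_not_ge hno
  exact Q_succ_move σ v hpar h1 hv

lemma travel (k : Fin (mcard σ v)) :
    ∀ s : ℕ, min (L - mcard σ v + (k : ℕ)) ((k : ℕ) + s) ≤ Q σ v (mcard σ v - (k : ℕ) + s) k := by
  intro s
  induction s with
  | zero =>
    have := le_Q σ v (mcard σ v - (k : ℕ) + 0) k
    omega
  | succ s ih =>
    have he : mcard σ v - (k : ℕ) + (s + 1) = (mcard σ v - (k : ℕ) + s) + 1 := rfl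
    rw [he]
    rcases le_or_gt (L - mcard σ v + (k : ℕ)) (Q σ v (mcard σ v - (k : ℕ) + s) k) with h | h
    · have := Q_mono_succ σ v (mcard σ v - (k : ℕ) + s) k
      omega
    · have hmv := move_lemma σ v (mcard σ v - (k : ℕ) + s) k (by omega) (by omega)
      rw [hmv]
      omega

lemma Q_final (k : Fin (mcard σ v)) : Q σ v L k = L - mcard σ v + (k : ℕ) := by
  have hm : mcard σ v ≤ L := mcard_le σ v
  have hkm := k.isLt
  have h1 := travel σ v k (L - (mcard σ v - (k : ℕ)))
  have he : mcard σ v - (k : ℕ) + (L - (mcard σ v - (k : ℕ))) = L := by omega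
  rw [he] at h1
  have h2 := Q_le σ v L k
  omega

lemma mem_final (i : Fin L) : i ∈ thrS σ v L ↔ L - mcard σ v ≤ (i : ℕ) := by
  have hm : mcard σ v ≤ L := mcard_le σ v
  constructor
  · intro hi
    have hrange : i ∈ Set.range (qEmb σ v L) := by
      unfold qEmb
      erw [Finset.range_orderEmbOfFin]
      simpa using hi
    obtain ⟨k, hk⟩ := hrange
    have : Q σ v L k = (i : ℕ) := by unfold Q; rw [hk]
    have := Q_final σ v k
    omega
  · intro hi
    have hk : (i : ℕ) - (L - mcard σ v) < mcard σ v := by have := i.isLt; omega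
    have := Q_final σ v ⟨(i : ℕ) - (L - mcard σ v), hk⟩
    have heq : qEmb σ v L ⟨(i : ℕ) - (L - mcard σ v), hk⟩ = i := by
      apply Fin.ext
      unfold Q at this
      simp only [Fin.val_mk] at this ⊢
      omega
    rw [← heq]
    exact Q_mem σ v L _

end Threshold2

/-- After `L` rounds the state is sorted, i.e. equal to the identity. -/
lemma traj_L_eq_one (σ : Equiv.Perm (Fin L)) : traj σ L = 1 := by
  set f := traj σ L with hf
  have hmono : ∀ i j : Fin L, i < j → f i ≤ f j := by
    intro i j hij
    set v := f i with hv
    have hi : i ∈ thrS σ v L := by rw [mem_thrS]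
    have hbound := (mem_final σ v i).1 hi
    have hj : j ∈ thrS σ v L := by
      apply (mem_final σ v j).2
      rw [Fin.lt_def] at hij
      omega
    exact (mem_thrS σ v).1 hj
  have hstrict : StrictMono f := by
    intro i j hij
    rcases lt_or_eq_of_le (hmono i j hij) with h | h
    · exact h
    · exact absurd (f.injective h) (ne_of_lt hij)
  have hinvstrict : StrictMono (f⁻¹ : Equiv.Perm (Fin L)) := by
    intro a b hab
    rcases lt_trichotomy ((f⁻¹ : Equiv.Perm (Fin L)) a) ((f⁻¹ : Equiv.Perm (Fin L)) b) with h | h | h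
    · exact h
    · exfalso
      have : a = b := by
        have := congrArg f h
        simpa using this
      exact absurd this (ne_of_lt hab)
    · exfalso
      have := hstrict h
      simp only [Equiv.Perm.coe_inv, Equiv.apply_symm_apply] at this
      exact absurd hab (not_lt.mpr (le_of_lt this))
  have hge : ∀ (g : Equiv.Perm (Fin L)), StrictMono (g : Fin L → Fin L) →
      ∀ i : Fin L, (i : ℕ) ≤ (g i : ℕ) := by
    intro g hg i
    exact strictMono_le (fun a b hab => by exact hg hab) i
  apply Equiv.ext
  intro i
  have h1 := hge f hstrict i
  have h2 := hge f⁻¹ hinvstrict (f i)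
  simp only [Equiv.Perm.coe_inv, Equiv.symm_apply_apply] at h2
  apply Fin.ext
  simp only [Equiv.Perm.one_apply]
  omega

lemma traj_eq_prod (σ : Equiv.Perm (Fin L)) :
    ∀ n : ℕ, traj σ n = σ⁻¹ * (List.ofFn fun t : Fin n => layer (t : ℕ) (traj σ (t : ℕ))).prod := by
  intro n
  induction n with
  | zero => simp [traj]
  | succ n ih =>
    rw [List.ofFn_succ']
    simp only [List.concat_eq_append, List.prod_append, List.prod_cons, List.prod_nil, mul_one,
      Fin.coe_castSucc, Fin.val_last]
    show traj σ n * layer n (traj σ n) = _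
    rw [ih, mul_assoc]

/-- Each `layer` is a layer in the sense of `IsLayer`. -/
lemma isLayer_layer (t : ℕ) (π : Equiv.Perm (Fin L)) : IsLayer t (layer t π) := by
  constructor
  · apply Equiv.ext
    intro i
    simp only [Equiv.Perm.mul_apply, layer_apply, Equiv.Perm.one_apply]
    exact swapFun_involutive t π i
  · intro i
    rcases swapFun_cases t π i with h | ⟨h1, hpar, _, h⟩ | ⟨h0, hpar, _, h⟩
    · left
      rw [← layer_apply] at h
      exact h
    · right
      rw [layer_apply, h]
      constructor
      · left; rfl
      · simp only [Fin.val_mk]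
        omega
    · right
      rw [layer_apply, h]
      constructor
      · right; simp only [Fin.val_mk]; omega
      · simp only [Fin.val_mk]
        omega

end OddEvenSort

/-- Odd–even transposition sort correctness: every permutation of `Fin L` is a product of
`L` alternating layers (layer `t` having parity `t`). -/
theorem odd_even_transposition_sort {L : ℕ} (hL : 1 ≤ L) (σ : Equiv.Perm (Fin L)) :
    ∃ f : Fin L → Equiv.Perm (Fin L),
      (∀ t : Fin L, IsLayer (t : ℕ) (f t)) ∧ σ = (List.ofFn f).prod := by
  refine ⟨fun t : Fin L => OddEvenSort.layer (t : ℕ) (OddEvenSort.traj σ (t : ℕ)), ?_, ?_⟩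
  · intro t
    exact OddEvenSort.isLayer_layer (t : ℕ) _
  · have h := OddEvenSort.traj_eq_prod σ L
    rw [OddEvenSort.traj_L_eq_one σ] at h
    have h2 := eq_inv_mul_iff_mul_eq.mp h
    simpa using h2
end

section
/- Dyadic containers for the local-subproblem family: for every d ≥ 1 and 1 ≤ r ≤ d there is an assignment of a dyadic interval D(J) ⊆ [0, 2^d − 1] to each J ∈ I_{d,r} such that |J| ≤ |D(J)| ≤ 2|J| and the containers {D(J)} are pairwise disjoint. -/
/-!
Unfolding the recursion, `I_{d,r}` consists of the intervals `[k 2^m + 2^(m-1) - 1, (k+1) 2^m - 1]`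
for `k < 2^(r-1)`, where `m = d - r + 1 ≥ 1`: the right half of the `k`-th dyadic block of order
`m`, extended by one point to the left. That dyadic block, of length `2^m` against `2^(m-1) + 1`,
is the container, and blocks of different index are disjoint because `x ↦ x / 2^m` separates them.
-/

/-- The local-subproblem family `I_{d,r}` of closed integer intervals (as pairs of
endpoints): `I_{d,1} = {[2^{d−1}−1, 2^d−1]}` and
`I_{d,r} = I_{d−1,r−1} ⊔ (2^{d−1} + I_{d−1,r−1})` for `r ≥ 2`. -/
def Ifam : ℕ → ℕ → Finset (ℕ × ℕ)
  | _, 0 => ∅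
  | d, 1 => {(2 ^ (d - 1) - 1, 2 ^ d - 1)}
  | d, (r + 2) =>
      Ifam (d - 1) (r + 1) ∪
        (Ifam (d - 1) (r + 1)).image (fun p => (p.1 + 2 ^ (d - 1), p.2 + 2 ^ (d - 1)))
  termination_by d r => r

open Finset

theorem Nat.mem_Icc_mul_iff_div_eq {m : ℕ} (hm : 0 < m) (a x : ℕ) :
    x ∈ Icc (a * m) ((a + 1) * m - 1) ↔ x / m = a := by
  rw [mem_Icc, add_one_mul, Nat.div_eq_iff hm]

theorem Nat.disjoint_Icc_mul {m : ℕ} (hm : 0 < m) {a b : ℕ} (hab : a ≠ b) :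
    Disjoint (Icc (a * m) ((a + 1) * m - 1)) (Icc (b * m) ((b + 1) * m - 1)) :=
  disjoint_left.2 fun x ha hb =>
    hab <| ((mem_Icc_mul_iff_div_eq hm a x).1 ha).symm.trans
      ((mem_Icc_mul_iff_div_eq hm b x).1 hb)

def localInterval (n k : ℕ) : ℕ × ℕ :=
  (k * 2 ^ (n + 1) + 2 ^ n - 1, (k + 1) * 2 ^ (n + 1) - 1)

theorem localInterval_add (n j k : ℕ) :
    localInterval n (j + k) =
      ((localInterval n k).1 + j * 2 ^ (n + 1), (localInterval n k).2 + j * 2 ^ (n + 1)) := by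
  have : 0 < 2 ^ n := Nat.two_pow_pos n
  have : 0 < (k + 1) * 2 ^ (n + 1) := by positivity
  simp only [localInterval, Prod.mk.injEq]
  constructor
  · rw [add_mul]; omega
  · rw [add_assoc, add_mul]; omega

theorem Ifam_eq_image_localInterval (n r : ℕ) :
    Ifam (n + r + 1) (r + 1) = (range (2 ^ r)).image (localInterval n) := by
  induction r with
  | zero => simp [Ifam, localInterval]
  | succ r ih =>
    rw [Ifam, show n + (r + 1) + 1 - 1 = n + r + 1 by omega, ih, pow_succ 2 r, mul_two (2 ^ r),
      range_add, image_union, map_eq_image, image_image, image_image]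
    congr 1
    refine image_congr fun k _ => ?_
    simp only [Function.comp_apply, addLeftEmbedding_apply, localInterval_add, ← pow_add]
    ring_nf

theorem localInterval_snd_add_one_sub (n k : ℕ) :
    (localInterval n k).2 + 1 - 2 ^ (n + 1) = k * 2 ^ (n + 1) := by
  have : 0 < (k + 1) * 2 ^ (n + 1) := by positivity
  simp only [localInterval]
  rw [add_one_mul] at this ⊢
  omega

theorem Ifam_dyadic_containers_general (d r : ℕ) (hr : 1 ≤ r) (hrd : r ≤ d) :
    ∃ D : ℕ × ℕ → ℕ × ℕ,
      (∀ J ∈ Ifam d r,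
        (∃ a q, D J = (a * 2 ^ q, (a + 1) * 2 ^ q - 1)) ∧
        (D J).2 ≤ 2 ^ d - 1 ∧
        (D J).1 ≤ J.1 ∧ J.2 ≤ (D J).2 ∧
        J.2 - J.1 + 1 ≤ (D J).2 - (D J).1 + 1 ∧
        (D J).2 - (D J).1 + 1 ≤ 2 * (J.2 - J.1 + 1)) ∧
      ∀ J ∈ Ifam d r, ∀ J' ∈ Ifam d r, J ≠ J' →
        Disjoint (Finset.Icc (D J).1 (D J).2) (Finset.Icc (D J').1 (D J').2) := by
  obtain ⟨r, rfl⟩ : ∃ r', r = r' + 1 := ⟨r - 1, by omega⟩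
  obtain ⟨n, rfl⟩ : ∃ n, d = n + r + 1 := ⟨d - r - 1, by omega⟩
  refine ⟨fun J => (J.2 + 1 - 2 ^ (n + 1), J.2), ?_, ?_⟩ <;>
    simp only [Ifam_eq_image_localInterval, forall_mem_image, mem_range,
      localInterval_snd_add_one_sub]
  · intro k hk
    refine ⟨⟨k, n + 1, rfl⟩, ?_⟩
    have hblock : (k + 1) * 2 ^ (n + 1) ≤ 2 ^ (n + r + 1) := by
      rw [add_right_comm, pow_add 2 (n + 1) r, mul_comm (2 ^ (n + 1))]
      exact Nat.mul_le_mul_right _ hk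
    have := Nat.two_pow_pos n
    simp only [localInterval, add_one_mul, pow_succ] at hblock ⊢
    omega
  · intro k _ k' _ hne
    exact Nat.disjoint_Icc_mul (Nat.two_pow_pos _) fun h => hne (congrArg _ h)

/-- Dyadic containers for the local-subproblem family: every `J ∈ I_{d,r}` gets a
dyadic container `D(J) ⊆ [0, 2^d − 1]` with `J ⊆ D(J)` and `|J| ≤ |D(J)| ≤ 2|J|`,
the containers being pairwise disjoint. -/
theorem Ifam_dyadic_containers (d r : ℕ) (hd : 1 ≤ d) (hr : 1 ≤ r) (hrd : r ≤ d) :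
    ∃ D : ℕ × ℕ → ℕ × ℕ,
      (∀ J ∈ Ifam d r,
        (∃ a q, D J = (a * 2 ^ q, (a + 1) * 2 ^ q - 1)) ∧
        (D J).2 ≤ 2 ^ d - 1 ∧
        (D J).1 ≤ J.1 ∧ J.2 ≤ (D J).2 ∧
        J.2 - J.1 + 1 ≤ (D J).2 - (D J).1 + 1 ∧
        (D J).2 - (D J).1 + 1 ≤ 2 * (J.2 - J.1 + 1)) ∧
      ∀ J ∈ Ifam d r, ∀ J' ∈ Ifam d r, J ≠ J' →
        Disjoint (Finset.Icc (D J).1 (D J).2) (Finset.Icc (D J').1 (D J').2) :=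
  Ifam_dyadic_containers_general d r hr hrd
end

section
/- The phase polynomial f = f_B(s̃) ⊕ f_D(s) satisfies the parity-encoding condition in the even-row case: if r0 is even and s' is obtained from s by flipping s_{r0,c0} and s_{r0+1,c0}, then f(s) ⊕ f(s') = ⊕_{c' > c0} (s_{r0,c'} ⊕ s_{r0+1,c'}). -/
/-- Column-suffix parities `s̃_{r,c} = Σ_{r' ≥ r} s_{r',c}` (rows within `[0,L)`). -/
def colSuffix (L : ℕ) (s : ℕ → ℕ → ZMod 2) (r c : ℕ) : ZMod 2 :=
  ∑ r' ∈ Finset.Ico r L, s r' c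

/-- `f_D(s) = Σ_{r even} [T(s_r,s_r) + T(s_r,s_{r+1})]` (boundary convention: out-of-range
rows vanish). -/
def fD (L : ℕ) (s : ℕ → ℕ → ZMod 2) : ZMod 2 :=
  ∑ r ∈ (Finset.range L).filter (fun r => Even r),
    (triT L (s r) (s r) + triT L (s r) (s (r + 1)))

/-- `f_B(s̃) = Σ_{r even, r+2 ≤ L−1} T(s̃_r, s̃_{r+2}) + Σ_{r even, r ≥ 2} T(s̃_r, s̃_r)`. -/
def fB (L : ℕ) (st : ℕ → ℕ → ZMod 2) : ZMod 2 :=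
  (∑ r ∈ (Finset.range L).filter (fun r => Even r ∧ r + 2 ≤ L - 1),
      triT L (st r) (st (r + 2)))
    + ∑ r ∈ (Finset.range L).filter (fun r => Even r ∧ 2 ≤ r), triT L (st r) (st r)

/-- The phase polynomial `f(s) = f_B(s̃(s)) + f_D(s)`. -/
def fGamma (L : ℕ) (s : ℕ → ℕ → ZMod 2) : ZMod 2 :=
  fB L (colSuffix L s) + fD L s

lemma triT_add_left (L : ℕ) (x y z : ℕ → ZMod 2) :
    triT L (fun c => x c + y c) z = triT L x z + triT L y z := by
  unfold triT
  rw [← Finset.sum_add_distrib]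
  refine Finset.sum_congr rfl fun p _ => ?_
  rw [← Finset.sum_add_distrib]
  refine Finset.sum_congr rfl fun c' _ => ?_
  split_ifs <;> ring

lemma triT_add_right (L : ℕ) (x y z : ℕ → ZMod 2) :
    triT L x (fun c => y c + z c) = triT L x y + triT L x z := by
  unfold triT
  rw [← Finset.sum_add_distrib]
  refine Finset.sum_congr rfl fun p _ => ?_
  rw [← Finset.sum_add_distrib]
  refine Finset.sum_congr rfl fun c' _ => ?_
  split_ifs <;> ring

lemma triT_e_left (L c0 : ℕ) (hc0 : c0 < L) (x : ℕ → ZMod 2) :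
    triT L (fun c => if c = c0 then 1 else 0) x
      = ∑ c' ∈ Finset.Ico (c0 + 1) L, x c' := by
  unfold triT
  rw [Finset.sum_eq_single_of_mem c0 (Finset.mem_range.mpr hc0)]
  · have h : Finset.Ico (c0 + 1) L = (Finset.range L).filter (fun c' => c0 < c') := by
      ext a; simp [Finset.mem_Ico]; omega
    rw [h, Finset.sum_filter]
    refine Finset.sum_congr rfl fun c' _ => ?_
    simp
  · intro p _ hp
    refine Finset.sum_eq_zero fun c' _ => ?_
    simp [hp]

lemma triT_e_e (L c0 : ℕ) :
    triT L (fun c => if c = c0 then 1 else 0) (fun c => if c = c0 then 1 else 0) = 0 := by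
  unfold triT
  refine Finset.sum_eq_zero fun p _ => Finset.sum_eq_zero fun c' _ => ?_
  split_ifs with h1 h2 h3 <;> simp_all <;> omega

/-- Even-row case of the parity-encoding condition: if `r0` is even and `s'` is obtained
from `s` by flipping `s_{r0,c0}` and `s_{r0+1,c0}`, then
`f(s) ⊕ f(s') = ⊕_{c' > c0} (s_{r0,c'} ⊕ s_{r0+1,c'})`. -/
theorem parity_encoding_even_row (L : ℕ) (hL : 2 ≤ L) (s : ℕ → ℕ → ZMod 2)
    (hbound : ∀ r c, L ≤ r ∨ L ≤ c → s r c = 0)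
    (r0 c0 : ℕ) (hr0 : Even r0) (hr1 : r0 + 1 ≤ L - 1) (hc0 : c0 < L)
    (s' : ℕ → ℕ → ZMod 2)
    (hs' : ∀ r c, s' r c
      = s r c + if (r = r0 ∨ r = r0 + 1) ∧ c = c0 then 1 else 0) :
    fGamma L s + fGamma L s'
      = ∑ c' ∈ Finset.Ico (c0 + 1) L, (s r0 c' + s (r0 + 1) c') := by
  have h2 : (2 : ZMod 2) = 0 := by decide
  have hr0L : r0 + 1 < L := by omega
  set e : ℕ → ZMod 2 := fun c => if c = c0 then 1 else 0 with he
  have hx : s' r0 = fun c => s r0 c + e c := by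
    funext c; rw [hs']; by_cases h : c = c0 <;> simp [he, h]
  have hy : s' (r0 + 1) = fun c => s (r0 + 1) c + e c := by
    funext c; rw [hs']; by_cases h : c = c0 <;> simp [he, h]
  have hrow : ∀ r, r ≠ r0 → r ≠ r0 + 1 → s' r = s r := by
    intro r hA hB; funext c; rw [hs']; simp [hA, hB]
  -- column suffixes agree at even rows
  have hcol : ∀ r, Even r → colSuffix L s' r = colSuffix L s r := by
    intro r hr; funext c
    unfold colSuffix
    simp only [hs']
    rw [Finset.sum_add_distrib]
    have hz : (∑ r' ∈ Finset.Ico r L,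
        if (r' = r0 ∨ r' = r0 + 1) ∧ c = c0 then (1 : ZMod 2) else 0) = 0 := by
      by_cases hc : c = c0
      · have hsplit : ∀ r' : ℕ,
            (if (r' = r0 ∨ r' = r0 + 1) ∧ c = c0 then (1 : ZMod 2) else 0)
              = (if r' = r0 then 1 else 0) + (if r' = r0 + 1 then 1 else 0) := by
          intro r'
          by_cases h1 : r' = r0 <;> by_cases h2 : r' = r0 + 1 <;> simp [h1, h2, hc] <;> omega
        rw [Finset.sum_congr rfl fun r' _ => hsplit r', Finset.sum_add_distrib,
          Finset.sum_ite_eq' _ r0 (fun _ => (1 : ZMod 2)),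
          Finset.sum_ite_eq' _ (r0 + 1) (fun _ => (1 : ZMod 2))]
        by_cases hle : r ≤ r0
        · have m1 : r0 ∈ Finset.Ico r L := Finset.mem_Ico.mpr ⟨hle, by omega⟩
          have m2 : r0 + 1 ∈ Finset.Ico r L := Finset.mem_Ico.mpr ⟨by omega, hr0L⟩
          rw [if_pos m1, if_pos m2]; exact h2
        · obtain ⟨a, ha⟩ := hr; obtain ⟨b, hb⟩ := hr0
          have n1 : r0 ∉ Finset.Ico r L := by simp [Finset.mem_Ico]; omega
          have n2 : r0 + 1 ∉ Finset.Ico r L := by simp [Finset.mem_Ico]; omega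
          rw [if_neg n1, if_neg n2]; ring
      · simp [hc]
    rw [hz, add_zero]
  have hfB : fB L (colSuffix L s') = fB L (colSuffix L s) := by
    unfold fB
    congr 1
    · refine Finset.sum_congr rfl fun r hrm => ?_
      simp only [Finset.mem_filter] at hrm
      obtain ⟨k, hk⟩ := hrm.2.1
      rw [hcol r hrm.2.1, hcol (r + 2) ⟨k + 1, by omega⟩]
    · refine Finset.sum_congr rfl fun r hrm => ?_
      simp only [Finset.mem_filter] at hrm
      rw [hcol r hrm.2.1]
  have hfD : fD L s + fD L s'
      = ∑ c' ∈ Finset.Ico (c0 + 1) L, (s r0 c' + s (r0 + 1) c') := by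
    unfold fD
    rw [← Finset.sum_add_distrib]
    rw [Finset.sum_eq_single_of_mem r0
      (by simp only [Finset.mem_filter, Finset.mem_range]; exact ⟨by omega, hr0⟩)]
    · rw [hx, hy]
      simp only [triT_add_left, triT_add_right]
      rw [triT_e_e, triT_e_left L c0 hc0 (s r0), triT_e_left L c0 hc0 (s (r0 + 1)),
        Finset.sum_add_distrib]
      linear_combination (triT L (s r0) (s r0) + triT L (s r0) (s (r0 + 1))
        + triT L (s r0) e) * h2
    · intro r hrm hne
      simp only [Finset.mem_filter] at hrm
      obtain ⟨a, ha⟩ := hrm.2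
      obtain ⟨b, hb⟩ := hr0
      rw [hrow r hne (by omega), hrow (r + 1) (by omega) (by omega)]
      linear_combination (triT L (s r) (s r) + triT L (s r) (s (r + 1))) * h2
  unfold fGamma
  rw [hfB]
  linear_combination hfD + (fB L (colSuffix L s)) * h2
end

section
/- Gate-count lower bound for the reversal permutation: the total Manhattan displacement of the reversal permutation on the snake-ordered L×L grid is Θ(L³); since each nearest-neighbor swap decreases the total Manhattan displacement between the current and target configurations by at most 2, any sequence of nearest-neighbor swaps realizing the reversal requires at least Ω(L³) swaps. -/
/-- Grid cell holding snake-order label `i` on the `L×L` grid (inverse of the snake JW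
index): row `i / L`, column `i % L` on even rows and `L−1−(i % L)` on odd rows. -/
def cellOf (L i : ℕ) : ℕ × ℕ :=
  (i / L, if Even (i / L) then i % L else L - 1 - i % L)

/-- Manhattan distance between grid cells (ℕ coordinates). -/
def mdist (p q : ℕ × ℕ) : ℕ :=
  (p.1 - q.1) + (q.1 - p.1) + ((p.2 - q.2) + (q.2 - p.2))

/-- Total Manhattan displacement of a configuration `f` (cell of each label) from the
target of the reversal permutation, which sends label `i` to the cell of `L²−1−i`. -/
def Dtot (L : ℕ) (f : ℕ → ℕ × ℕ) : ℕ :=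
  ∑ i ∈ Finset.range (L * L), mdist (f i) (cellOf L (L * L - 1 - i))

/-- One nearest-neighbor swap step: the contents of two adjacent cells are exchanged. -/
def AdjSwapStep (L : ℕ) (f g : ℕ → ℕ × ℕ) : Prop :=
  ∃ a b : ℕ, a < L * L ∧ b < L * L ∧ mdist (f a) (f b) = 1 ∧
    g = fun i => if i = a then f b else if i = b then f a else f i

open Finset

lemma mdist_triangle (p q r : ℕ × ℕ) : mdist p r ≤ mdist p q + mdist q r := by
  simp only [mdist]; omega

lemma mdist_comm (p q : ℕ × ℕ) : mdist p q = mdist q p := by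
  simp only [mdist]; omega

/-- row-profile sum -/
def Srev (L : ℕ) : ℕ := ∑ q ∈ Finset.range L, ((L - 1 - 2*q) + (2*q - (L - 1)))

lemma Srev_step (L : ℕ) (hL : 1 ≤ L) : Srev (L+2) = Srev L + 2*(L+1) := by
  unfold Srev
  rw [Finset.sum_range_succ, Finset.sum_range_succ']
  have h1 : ∀ q ∈ Finset.range L,
      ((L + 2 - 1 - 2*(q+1)) + (2*(q+1) - (L + 2 - 1)))
        = ((L - 1 - 2*q) + (2*q - (L - 1))) := by
    intro q _; omega
  rw [Finset.sum_congr rfl h1]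
  omega

lemma S_lb : ∀ L, 2 ≤ L → L^2 ≤ 4 * Srev L := by
  intro L
  induction L using Nat.strong_induction_on with
  | _ L ih =>
    intro hL
    match L, hL with
    | 2, _ => simp [Srev, Finset.sum_range_succ]
    | 3, _ => simp [Srev, Finset.sum_range_succ]
    | (K+4), _ =>
      have h := ih (K+2) (by omega) (by omega)
      have hs : Srev (K+4) = Srev (K+2) + 2*(K+3) := Srev_step (K+2) (by omega)
      nlinarith [h, hs]

lemma sum_div_mul (b : ℕ) (f : ℕ → ℕ) :
    ∀ a, ∑ i ∈ Finset.range (a*b), f (i / b) = b * ∑ q ∈ Finset.range a, f q := by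
  intro a
  induction a with
  | zero => simp
  | succ a ih =>
    rcases Nat.eq_zero_or_pos b with hb | hb
    · simp [hb]
    · rw [Nat.succ_mul, Finset.sum_range_add, ih, Finset.sum_range_succ]
      have h1 : ∀ i ∈ Finset.range b, f ((a*b + i) / b) = f a := by
        intro i hi
        congr 1
        rw [Nat.add_comm, Nat.mul_comm, Nat.add_mul_div_left _ _ hb,
          Nat.div_eq_of_lt (Finset.mem_range.mp hi), Nat.zero_add]
      rw [Finset.sum_congr rfl h1, Finset.sum_const, Finset.card_range, smul_eq_mul,
        Nat.mul_add]

lemma div_rev (L i : ℕ) (hi : i < L*L) : (L*L - 1 - i)/L = L - 1 - i/L := by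
  have hL : 0 < L := by
    rcases Nat.eq_zero_or_pos L with h | h
    · subst h; omega
    · exact h
  obtain ⟨q, r, hr, rfl⟩ : ∃ q r, r < L ∧ i = L*q + r :=
    ⟨i/L, i%L, Nat.mod_lt _ hL, (Nat.div_add_mod i L).symm⟩
  have hq : q < L := by
    by_contra h
    push_neg at h
    have : L*L ≤ L*q := Nat.mul_le_mul_left _ h
    omega
  have hdiv : (L*q + r)/L = q := by
    rw [Nat.mul_add_div hL, Nat.div_eq_of_lt hr, Nat.add_zero]
  have key : L*L - 1 - (L*q + r) = (L - 1 - r) + L*(L - 1 - q) := by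
    have h1 : 1 ≤ L*L := Nat.mul_pos hL hL
    have h2 : L*q + r ≤ L*L - 1 := by omega
    have h3 : r ≤ L - 1 := by omega
    have h4 : q ≤ L - 1 := by omega
    have h5 : 1 ≤ L := hL
    zify [h1, h2, h3, h4, h5]
    ring
  rw [hdiv, key, Nat.add_mul_div_left _ _ hL, Nat.div_eq_of_lt (by omega), Nat.zero_add]

lemma part_a (L : ℕ) (hL : 2 ≤ L) : L^3 ≤ 4 * Dtot L (cellOf L) := by
  have h1 : L * Srev L ≤ Dtot L (cellOf L) := by
    rw [Dtot, show L * Srev L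
        = ∑ i ∈ Finset.range (L*L), ((L - 1 - 2*(i/L)) + (2*(i/L) - (L - 1))) from
      (sum_div_mul L (fun q => (L - 1 - 2*q) + (2*q - (L - 1))) L).symm]
    apply Finset.sum_le_sum
    intro i hi
    have hi' := Finset.mem_range.mp hi
    have hd := div_rev L i hi'
    have hq : i / L < L := Nat.div_lt_of_lt_mul hi'
    have hrow : (L - 1 - 2*(i/L)) + (2*(i/L) - (L - 1))
        ≤ (i/L - (L - 1 - i/L)) + ((L - 1 - i/L) - i/L) := by omega
    calc (L - 1 - 2*(i/L)) + (2*(i/L) - (L - 1))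
        ≤ (i/L - (L - 1 - i/L)) + ((L - 1 - i/L) - i/L) := hrow
      _ ≤ mdist (cellOf L i) (cellOf L (L*L - 1 - i)) := by
          simp only [mdist, cellOf, hd]
          exact Nat.le_add_right _ _
  have h2 : L^2 ≤ 4 * Srev L := S_lb L hL
  calc L^3 = L * L^2 := by ring
    _ ≤ L * (4 * Srev L) := Nat.mul_le_mul_left _ h2
    _ = 4 * (L * Srev L) := by ring
    _ ≤ 4 * Dtot L (cellOf L) := Nat.mul_le_mul_left _ h1

lemma step_le (L : ℕ) {f g : ℕ → ℕ × ℕ} (h : AdjSwapStep L f g) :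
    Dtot L g ≤ Dtot L f + 2 := by
  obtain ⟨a, b, ha, hb, hab, rfl⟩ := h
  have hne : a ≠ b := by
    intro h'
    rw [h'] at hab
    simp [mdist] at hab
  have key : ∀ i ∈ Finset.range (L*L),
      mdist ((fun i => if i = a then f b else if i = b then f a else f i) i)
        (cellOf L (L*L - 1 - i))
      ≤ mdist (f i) (cellOf L (L*L - 1 - i))
        + ((if i = a then 1 else 0) + (if i = b then 1 else 0)) := by
    intro i _
    beta_reduce
    by_cases h1 : i = a
    · have := mdist_triangle (f b) (f a) (cellOf L (L*L - 1 - i))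
      rw [mdist_comm (f b) (f a), hab] at this
      rw [h1, if_pos rfl, if_pos rfl, if_neg hne]
      rw [← h1] at this ⊢
      omega
    · by_cases h2 : i = b
      · have hba : b ≠ a := fun hh => h1 (h2.trans hh)
        have := mdist_triangle (f a) (f b) (cellOf L (L*L - 1 - i))
        rw [h2, if_neg hba, if_pos rfl, if_neg hba, if_pos rfl]
        rw [← h2] at this hab ⊢
        omega
      · rw [if_neg h1, if_neg h2, if_neg h1, if_neg h2]
        omega
  calc Dtot L (fun i => if i = a then f b else if i = b then f a else f i)
      ≤ ∑ i ∈ Finset.range (L*L),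
          (mdist (f i) (cellOf L (L*L - 1 - i))
            + ((if i = a then 1 else 0) + (if i = b then 1 else 0))) :=
        Finset.sum_le_sum key
    _ = Dtot L f + (∑ i ∈ Finset.range (L*L), ((if i = a then 1 else 0)
          + (if i = b then 1 else 0))) := by
        rw [Dtot, Finset.sum_add_distrib]
    _ = Dtot L f + 2 := by
        rw [Finset.sum_add_distrib, Finset.sum_ite_eq' (Finset.range (L*L)) a (fun _ => 1),
          Finset.sum_ite_eq' (Finset.range (L*L)) b (fun _ => 1),
          if_pos (Finset.mem_range.mpr ha), if_pos (Finset.mem_range.mpr hb)]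

lemma part_b (L : ℕ) (f g : ℕ → ℕ × ℕ) (h : AdjSwapStep L f g) :
    Dtot L g ≤ Dtot L f + 2 ∧ Dtot L f ≤ Dtot L g + 2 := by
  refine ⟨step_le L h, step_le L ?_⟩
  obtain ⟨a, b, ha, hb, hab, rfl⟩ := h
  have hne : a ≠ b := by
    intro h'
    rw [h'] at hab
    simp [mdist] at hab
  refine ⟨a, b, ha, hb, ?_, ?_⟩
  · simp only [if_pos rfl, if_neg hne, if_neg (Ne.symm hne)]
    rw [mdist_comm]; exact hab
  · funext i
    by_cases h1 : i = a
    · subst h1; simp [hne, Ne.symm hne]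
    · by_cases h2 : i = b
      · subst h2; simp [hne, Ne.symm hne]
      · simp [h1, h2]

/-- Gate-count lower bound for the reversal permutation on the snake-ordered `L×L` grid:
(a) the initial total displacement satisfies `4·D ≥ L³`; (b) each nearest-neighbor swap
changes `D` by at most 2; hence (c) any swap sequence realizing the reversal has length
`m` with `8m ≥ L³`. -/
theorem reversal_gate_lower_bound (L : ℕ) (hL : 2 ≤ L) :
    (L ^ 3 ≤ 4 * Dtot L (cellOf L)) ∧
    (∀ f g : ℕ → ℕ × ℕ, AdjSwapStep L f g →
      Dtot L g ≤ Dtot L f + 2 ∧ Dtot L f ≤ Dtot L g + 2) ∧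
    (∀ (m : ℕ) (F : ℕ → ℕ → ℕ × ℕ), F 0 = cellOf L →
      (∀ t < m, AdjSwapStep L (F t) (F (t + 1))) →
      Dtot L (F m) = 0 → L ^ 3 ≤ 8 * m) := by
  refine ⟨part_a L hL, part_b L, ?_⟩
  intro m F hF0 hstep hFm
  have mono : ∀ t, t ≤ m → Dtot L (cellOf L) ≤ Dtot L (F t) + 2*t := by
    intro t
    induction t with
    | zero => intro _; rw [hF0]; omega
    | succ t ih =>
      intro ht
      have h1 := ih (by omega)
      have h2 := (part_b L (F t) (F (t+1)) (hstep t (by omega))).2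
      omega
  have hfin := mono m le_rfl
  rw [hFm] at hfin
  have ha := part_a L hL
  omega
end
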